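/- Let λ1, λ2, λ3 : ℤ → ℂˣ, μ1, μ2, μ3 : ℤ → ℂˣ, and x, y : ℤ × ℤ → ℂˣ, and set ρ(l,m) = λ3(l)^((−1)^m), σ(l,m) = μ3(m)^((−1)^l). Define lattice terms a = λ1·x̄/x, b = ρ/y, c = ȳ/ρ, d = λ2, α = μ1·x̂/x, β = 1/(σ·y), γ = σ·ŷ, δ = μ2. Then the six equations (i) â·α = a·ᾱ, (ii) b̂·γ = c·β̄, (iii) d̂·δ = d·δ̄, (iv) ĉ·β = b·γ̄, (v) â·β + b̂·δ = b·ᾱ + d·β̄, (vi) ĉ·α + d̂·γ = a·γ̄ + c·δ̄ hold for all (l,m) ∈ ℤ² if and only if (x,y) satisfies the LMKdV₂ system for all (l,m): (LMKdV2-a) (λ1/σ)·(x̂̄/x̂) + (μ2/ρ)·(y/ŷ) = λ2·σ·(y/ȳ) + ρ·μ1·(x̂̄/x̄) and (LMKdV2-b) ρ·μ1·x̂·ŷ̄ + λ2·σ·x·ŷ = (μ2/ρ)·x·ȳ + (λ1/σ)·x̄·ŷ̄. Moreover equations (i)–(iv) hold identically for these lattice terms. -/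

import Mathlib

/-- `ρ(l,m) = λ3(l)^((−1)^m)`. -/
noncomputable def rho (lam3 : ℤ → ℂˣ) (l m : ℤ) : ℂˣ :=
  lam3 l ^ ((((-1 : ℤˣ) ^ m) : ℤˣ) : ℤ)

/-- `σ(l,m) = μ3(m)^((−1)^l)`. -/
noncomputable def sig (μ3 : ℤ → ℂˣ) (l m : ℤ) : ℂˣ :=
  μ3 m ^ ((((-1 : ℤˣ) ^ l) : ℤˣ) : ℤ)

private lemma rho_succ' (lam3 : ℤ → ℂˣ) (l m : ℤ) :
    ((rho lam3 l (m + 1) : ℂ)) = (rho lam3 l m : ℂ)⁻¹ := by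
  unfold rho
  rw [zpow_add_one, Units.val_mul, Units.val_neg, Units.val_one, mul_neg_one, zpow_neg]
  simp

private lemma sig_succ' (μ3 : ℤ → ℂˣ) (l m : ℤ) :
    ((sig μ3 (l + 1) m : ℂ)) = (sig μ3 l m : ℂ)⁻¹ := by
  unfold sig
  rw [zpow_add_one, Units.val_mul, Units.val_neg, Units.val_one, mul_neg_one, zpow_neg]
  simp

set_option maxHeartbeats 1600000

/-- the lattice-term system for the LMKdV₂ Lax pair reduces to the
LMKdV₂ evolution equations; the four linear equations hold identically. -/
theorem stmt8 (lam1 lam2 lam3 : ℤ → ℂˣ) (μ1 μ2 μ3 : ℤ → ℂˣ) (x y : ℤ × ℤ → ℂˣ)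
    (a b c d α β γ δ : ℤ × ℤ → ℂ)
    (ha : ∀ l m : ℤ, a (l, m) = (lam1 l : ℂ) * x (l + 1, m) / x (l, m))
    (hb : ∀ l m : ℤ, b (l, m) = (rho lam3 l m : ℂ) / y (l, m))
    (hc : ∀ l m : ℤ, c (l, m) = (y (l + 1, m) : ℂ) / rho lam3 l m)
    (hd : ∀ l m : ℤ, d (l, m) = (lam2 l : ℂ))
    (hα : ∀ l m : ℤ, α (l, m) = (μ1 m : ℂ) * x (l, m + 1) / x (l, m))
    (hβ : ∀ l m : ℤ, β (l, m) = 1 / ((sig μ3 l m : ℂ) * y (l, m)))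
    (hγ : ∀ l m : ℤ, γ (l, m) = (sig μ3 l m : ℂ) * y (l, m + 1))
    (hδ : ∀ l m : ℤ, δ (l, m) = (μ2 m : ℂ)) :
    ((∀ l m : ℤ,
        a (l, m + 1) * α (l, m) = a (l, m) * α (l + 1, m) ∧
        b (l, m + 1) * γ (l, m) = c (l, m) * β (l + 1, m) ∧
        d (l, m + 1) * δ (l, m) = d (l, m) * δ (l + 1, m) ∧
        c (l, m + 1) * β (l, m) = b (l, m) * γ (l + 1, m) ∧
        a (l, m + 1) * β (l, m) + b (l, m + 1) * δ (l, m) =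
          b (l, m) * α (l + 1, m) + d (l, m) * β (l + 1, m) ∧
        c (l, m + 1) * α (l, m) + d (l, m + 1) * γ (l, m) =
          a (l, m) * γ (l + 1, m) + c (l, m) * δ (l + 1, m)) ↔
      (∀ l m : ℤ,
        (lam1 l : ℂ) / (sig μ3 l m) * (x (l + 1, m + 1) / x (l, m + 1)) +
            (μ2 m : ℂ) / (rho lam3 l m) * (y (l, m) / y (l, m + 1)) =
          (lam2 l : ℂ) * sig μ3 l m * (y (l, m) / y (l + 1, m)) +
            (rho lam3 l m : ℂ) * μ1 m * (x (l + 1, m + 1) / x (l + 1, m)) ∧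
        (rho lam3 l m : ℂ) * μ1 m * x (l, m + 1) * y (l + 1, m + 1) +
            (lam2 l : ℂ) * sig μ3 l m * x (l, m) * y (l, m + 1) =
          (μ2 m : ℂ) / (rho lam3 l m) * x (l, m) * y (l + 1, m) +
            (lam1 l : ℂ) / (sig μ3 l m) * x (l + 1, m) * y (l + 1, m + 1))) ∧
    (∀ l m : ℤ,
      a (l, m + 1) * α (l, m) = a (l, m) * α (l + 1, m) ∧
      b (l, m + 1) * γ (l, m) = c (l, m) * β (l + 1, m) ∧
      d (l, m + 1) * δ (l, m) = d (l, m) * δ (l + 1, m) ∧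
      c (l, m + 1) * β (l, m) = b (l, m) * γ (l + 1, m)) := by
  have four : ∀ l m : ℤ,
      a (l, m + 1) * α (l, m) = a (l, m) * α (l + 1, m) ∧
      b (l, m + 1) * γ (l, m) = c (l, m) * β (l + 1, m) ∧
      d (l, m + 1) * δ (l, m) = d (l, m) * δ (l + 1, m) ∧
      c (l, m + 1) * β (l, m) = b (l, m) * γ (l + 1, m) := by
    intro l m
    refine ⟨?_, ?_, ?_, ?_⟩ <;>
      simp only [ha, hb, hc, hd, hα, hβ, hγ, hδ, rho_succ', sig_succ'] <;>
      field_simp <;> ring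
  refine ⟨⟨fun h l m => ?_, fun h l m => ?_⟩, four⟩
  · obtain ⟨_, _, _, _, h5, h6⟩ := h l m
    simp only [ha, hb, hc, hd, hα, hβ, hγ, hδ, rho_succ', sig_succ'] at h5 h6
    field_simp at h5 h6
    constructor
    · field_simp
      apply mul_left_cancel₀ (Units.ne_zero (y (l, m)) : (y (l, m) : ℂ) ≠ 0)
      linear_combination (y (l, m) : ℂ) * h5
    · field_simp
      apply mul_left_cancel₀ (Units.ne_zero (x (l, m)) : (x (l, m) : ℂ) ≠ 0)
      linear_combination (x (l, m) : ℂ) * h6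
  · obtain ⟨h1, h2⟩ := h l m
    obtain ⟨f1, f2, f3, f4⟩ := four l m
    field_simp at h1 h2
    refine ⟨f1, f2, f3, f4, ?_, ?_⟩
    · simp only [ha, hb, hc, hd, hα, hβ, hγ, hδ, rho_succ', sig_succ']
      field_simp
      linear_combination h1
    · simp only [ha, hb, hc, hd, hα, hβ, hγ, hδ, rho_succ', sig_succ']
      field_simp
      linear_combination h2
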